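/- arXiv:1704.07974 — 3 statements merged into one kernel-verified Lean document; each statement's English description precedes it below -/
import Mathlib

section
/- Let γ ∈ ℂ \ {0}, 0 ≤ λ ≤ 1, -1 ≤ B < A ≤ 1, and m ∈ ℕ with m ≥ 2. If |γ(A−B) − B(m−2)| ≥ m−2, then |γ|²(A−B)² + Σ_{k=2}^{m−1} [ | |γ(A−B) − B(k−1)|² − (k−1)² | / ((k−1)!)² ] · Π_{j=0}^{k−2} |γ(A−B) − jB|² = Π_{j=0}^{m−2} |γ(A−B) − jB|² / ((m−2)!)². -/
/-!
Write `z = γ(A - B)` and `P k = ∏_{j<k} |z - jB|²`. Without the absolute value, the summand of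
index `k` is `P k / ((k-1)!)² - P (k-1) / ((k-2)!)²`, so the sum telescopes. The absolute values
are harmless: `t ↦ |z - tB| - t` is nonincreasing because `|B| ≤ 1`, so the hypothesis at
`t = m - 2` gives `|z - tB| ≥ t` for every `t ≤ m - 2`.
-/

open Finset

theorem antitone_norm_sub_smul_sub {E : Type*} [SeminormedAddCommGroup E] [NormedSpace ℝ E]
    (z v : E) (hv : ‖v‖ ≤ 1) : Antitone fun t : ℝ => ‖z - t • v‖ - t := by
  intro s t hst
  have : ‖z - t • v‖ ≤ ‖z - s • v‖ + (t - s) :=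
    calc ‖z - t • v‖ ≤ ‖z - s • v‖ + ‖(t - s) • v‖ := by
          simpa [sub_smul, norm_sub_rev (s • v)] using
            norm_sub_le_norm_sub_add_norm_sub z (s • v) (t • v)
      _ ≤ ‖z - s • v‖ + (t - s) := by
          rw [norm_smul, Real.norm_of_nonneg (sub_nonneg.2 hst)]
          gcongr
          exact mul_le_of_le_one_right (sub_nonneg.2 hst) hv
  dsimp only
  linarith

theorem add_sum_range_div_factorial_sq_mul_prod (a : ℕ → ℝ) (n : ℕ) :
    a 0 + ∑ i ∈ range n,
        (a (i + 1) - ((i + 1 : ℕ) : ℝ) ^ 2) / ((i + 1).factorial : ℝ) ^ 2 * ∏ j ∈ range (i + 1), a j =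
      (∏ j ∈ range (n + 1), a j) / (n.factorial : ℝ) ^ 2 := by
  let f : ℕ → ℝ := fun i => (∏ j ∈ range (i + 1), a j) / (i.factorial : ℝ) ^ 2
  have step : ∀ i, (a (i + 1) - ((i + 1 : ℕ) : ℝ) ^ 2) / ((i + 1).factorial : ℝ) ^ 2 *
      ∏ j ∈ range (i + 1), a j = f (i + 1) - f i := by
    intro i
    simp only [f, prod_range_succ _ (i + 1), Nat.factorial_succ, Nat.cast_mul]
    field_simp
  rw [sum_congr rfl fun i _ => step i, sum_range_sub]
  simp [f]

theorem stmt0_general (γ : ℂ)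
    (A B : ℝ) (hB : -1 ≤ B) (hBA : B < A) (hA : A ≤ 1) (m : ℕ) (hm : 2 ≤ m)
    (h : (m : ℝ) - 2 ≤ ‖γ * ((A : ℂ) - B) - B * ((m : ℂ) - 2)‖) :
    ‖γ‖ ^ 2 * (A - B) ^ 2 +
      ∑ k ∈ Finset.Icc 2 (m - 1),
        (|‖γ * ((A : ℂ) - B) - B * ((k : ℂ) - 1)‖ ^ 2 - ((k : ℝ) - 1) ^ 2| /
            ((Nat.factorial (k - 1) : ℝ)) ^ 2) *
          ∏ j ∈ Finset.range (k - 1), ‖γ * ((A : ℂ) - B) - (j : ℂ) * B‖ ^ 2 =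
      (∏ j ∈ Finset.range (m - 1), ‖γ * ((A : ℂ) - B) - (j : ℂ) * B‖ ^ 2) /
        ((Nat.factorial (m - 2) : ℝ)) ^ 2 := by
  obtain ⟨n, rfl⟩ : ∃ n, m = n + 2 := ⟨m - 2, by omega⟩
  set z := γ * ((A : ℂ) - B)
  have hB1 : ‖(B : ℂ)‖ ≤ 1 := by
    rw [Complex.norm_real, Real.norm_eq_abs]
    exact abs_le.2 ⟨hB, hBA.le.trans hA⟩
  have hn : (n : ℝ) ≤ ‖z - (n : ℂ) * B‖ := by
    convert h using 3 <;> push_cast <;> ring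
  have hbound (k : ℕ) (hk : k ≤ n) : (k : ℝ) ^ 2 ≤ ‖z - (k : ℂ) * B‖ ^ 2 := by
    have := antitone_norm_sub_smul_sub z (B : ℂ) hB1 (show (k : ℝ) ≤ n by exact_mod_cast hk)
    push_cast [Complex.real_smul] at this
    gcongr
    linarith
  have hz : ‖γ‖ ^ 2 * (A - B) ^ 2 = ‖z‖ ^ 2 := by
    rw [norm_mul, mul_pow, ← Complex.ofReal_sub, Complex.norm_real, Real.norm_eq_abs, sq_abs]
  rw [hz, show n + 2 - 1 = n + 1 by omega, show n + 2 - 2 = n by omega,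
    ← Finset.Ico_add_one_right_eq_Icc, Finset.sum_Ico_eq_sum_range,
    ← add_sum_range_div_factorial_sq_mul_prod (fun j => ‖z - (j : ℂ) * B‖ ^ 2)]
  simp only [Nat.cast_zero, zero_mul, sub_zero, show n + 1 + 1 - 2 = n by omega]
  congr 1
  refine Finset.sum_congr rfl fun i hi => ?_
  have hw : (B : ℂ) * (((2 + i : ℕ) : ℂ) - 1) = ((i + 1 : ℕ) : ℂ) * B := by push_cast; ring
  have hr : ((2 + i : ℕ) : ℝ) - 1 = ((i + 1 : ℕ) : ℝ) := by push_cast; ring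
  rw [show 2 + i - 1 = i + 1 by omega, hw, hr,
    abs_of_nonneg (sub_nonneg.2 (hbound (i + 1) (Finset.mem_range.1 hi)))]

theorem stmt0 (γ : ℂ) (hγ : γ ≠ 0) (lam : ℝ) (hl0 : 0 ≤ lam) (hl1 : lam ≤ 1)
    (A B : ℝ) (hB : -1 ≤ B) (hBA : B < A) (hA : A ≤ 1) (m : ℕ) (hm : 2 ≤ m)
    (h : (m : ℝ) - 2 ≤ ‖γ * ((A : ℂ) - B) - B * ((m : ℂ) - 2)‖) :
    ‖γ‖ ^ 2 * (A - B) ^ 2 +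
      ∑ k ∈ Finset.Icc 2 (m - 1),
        (|‖γ * ((A : ℂ) - B) - B * ((k : ℂ) - 1)‖ ^ 2 - ((k : ℝ) - 1) ^ 2| /
            ((Nat.factorial (k - 1) : ℝ)) ^ 2) *
          ∏ j ∈ Finset.range (k - 1), ‖γ * ((A : ℂ) - B) - (j : ℂ) * B‖ ^ 2 =
      (∏ j ∈ Finset.range (m - 1), ‖γ * ((A : ℂ) - B) - (j : ℂ) * B‖ ^ 2) /
        ((Nat.factorial (m - 2) : ℝ)) ^ 2 :=
  stmt0_general γ A B hB hBA hA m hm h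
end

section
/- Let p be analytic on the unit disk 𝔻 with p(0) = 1, and let A = e^{−2iα} with |α| < π/2. If z p'(z)/p(z)² is subordinate to h₁(z) = (A+1)z/(1+Az)² on 𝔻, then p is subordinate to (1+Az)/(1−z) on 𝔻. -/
/-!
Put `w = (p - 1) / (p + A)`, so that `p = (1 + A w) / (1 - w)`; since `‖A‖ = 1`,
`‖p + A‖² - ‖p - 1‖² = 2 Re ((1 + conj A) p)`, so `‖w‖ < 1` wherever this real part is positive.
If it is not positive on the whole disk, let `z₀` be a point of least modulus where it vanishes.
Then `‖w‖ ≤ 1 = ‖w z₀‖` on `‖z‖ ≤ ‖z₀‖`, and Jack's lemma gives `z₀ w'(z₀) = k w(z₀)` with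
`k ≥ 1`. In terms of `w`, `z p' / p² = (1 + A) z w' / (1 + A w)²`, and for `v = A w(z₀)` on the
unit circle `v / (1 + v)² = 1 / ‖1 + v‖² ≥ 1/4`. With `u = A ω(z₀)` the subordination then gives
`u / (1 + u)² = k / ‖1 + v‖² ≥ 1/4`, a value the Koebe function `u / (1 + u)²` omits on the disk.
-/

/-- `f` is subordinate to `g` on the unit disk. -/
def Subordinate (f g : ℂ → ℂ) : Prop :=
  ∃ ω : ℂ → ℂ, DifferentiableOn ℂ ω (Metric.ball 0 1) ∧ ω 0 = 0 ∧
    (∀ z ∈ Metric.ball (0 : ℂ) 1, ω z ∈ Metric.ball (0 : ℂ) 1) ∧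
    ∀ z ∈ Metric.ball (0 : ℂ) 1, f z = g (ω z)

open Complex Metric Set ComplexConjugate

-- The real quadratic `t (1 + u)² = u` has root product `1`, so a non-real root has modulus `1`.
theorem Complex.div_one_add_sq_ne_ofReal {u : ℂ} (hu : ‖u‖ < 1) {t : ℝ} (ht : 1 / 4 ≤ t) :
    u / (1 + u) ^ 2 ≠ t := by
  intro h
  have h1u : 1 + u ≠ 0 := by
    intro h0
    rw [show u = -1 by linear_combination h0] at hu
    simp at hu
  have hq : (t : ℂ) * (1 + u) ^ 2 = u := by
    rw [div_eq_iff (pow_ne_zero 2 h1u)] at h; exact h.symm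
  have hre := congrArg re hq
  have him := congrArg im hq
  simp only [sq, mul_re, mul_im, add_re, add_im, one_re, one_im, ofReal_re, ofReal_im] at hre him
  have hnorm : u.re ^ 2 + u.im ^ 2 < 1 := by
    nlinarith [sq_norm_sub_sq_re u, norm_nonneg u]
  rcases eq_or_ne u.im 0 with hy | hy
  · simp only [hy] at hre hnorm
    nlinarith [sq_nonneg (u.re - 1)]
  · have hx : 2 * t * u.re + 2 * t - 1 = 0 := by
      apply mul_left_cancel₀ hy; linarith
    nlinarith

theorem Complex.div_one_add_sq_of_norm_eq_one {v : ℂ} (hv : ‖v‖ = 1) (h1v : 1 + v ≠ 0) :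
    v / (1 + v) ^ 2 = ((‖1 + v‖ ^ 2)⁻¹ : ℝ) := by
  have hv0 : v ≠ 0 := by rintro rfl; simp at hv
  have hN : ((‖1 + v‖ ^ 2 : ℝ) : ℂ) = (1 + v) ^ 2 / v := by
    push_cast
    rw [← mul_conj', map_add, map_one, ← inv_eq_conj hv]
    field_simp
    ring
  rw [ofReal_inv, hN, inv_div]

theorem Complex.add_one_mul_div_sq_ne_of_norm_eq_one {A ζ w₀ : ℂ} {k : ℝ} (hA : ‖A‖ = 1)
    (h1A : 1 + A ≠ 0) (hζ : ‖ζ‖ < 1) (hw₀ : ‖w₀‖ = 1) (hAw₀ : 1 + A * w₀ ≠ 0) (hk : 1 ≤ k) :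
    (A + 1) * ζ / (1 + A * ζ) ^ 2 ≠ (1 + A) * (k * w₀) / (1 + A * w₀) ^ 2 := by
  intro h
  have hv : ‖A * w₀‖ = 1 := by rw [norm_mul, hA, hw₀, one_mul]
  have h2 : ‖1 + A * w₀‖ ≤ 2 :=
    (norm_add_le 1 (A * w₀)).trans_eq (by rw [norm_one, hv, one_add_one_eq_two])
  have hN : ‖1 + A * w₀‖ ^ 2 ≤ 4 := by nlinarith [norm_nonneg (1 + A * w₀)]
  have hNpos : 0 < ‖1 + A * w₀‖ ^ 2 := by positivity
  apply div_one_add_sq_ne_ofReal (u := A * ζ) (by rwa [norm_mul, hA, one_mul])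
    (t := k / ‖1 + A * w₀‖ ^ 2) (by rw [le_div_iff₀ hNpos]; linarith)
  calc A * ζ / (1 + A * ζ) ^ 2 = A / (1 + A) * ((A + 1) * ζ / (1 + A * ζ) ^ 2) := by
        field_simp; ring
    _ = k * (A * w₀ / (1 + A * w₀) ^ 2) := by rw [h]; field_simp
    _ = _ := by rw [div_one_add_sq_of_norm_eq_one hv hAw₀]; push_cast; ring

theorem Complex.normSq_add_sub_normSq_sub_one {A : ℂ} (hA : ‖A‖ = 1) (u : ℂ) :
    normSq (u + A) - normSq (u - 1) = 2 * ((1 + conj A) * u).re := by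
  have : A.re ^ 2 + A.im ^ 2 = 1 := by nlinarith [sq_norm_sub_sq_re A]
  simp only [normSq_apply, add_re, add_im, sub_re, sub_im, mul_re, one_re, one_im,
    conj_re, conj_im]
  linear_combination this

theorem Complex.norm_sub_one_le_norm_add_iff {A : ℂ} (hA : ‖A‖ = 1) (u : ℂ) :
    ‖u - 1‖ ≤ ‖u + A‖ ↔ 0 ≤ ((1 + conj A) * u).re := by
  rw [← sq_le_sq₀ (norm_nonneg _) (norm_nonneg _), ← normSq_eq_norm_sq, ← normSq_eq_norm_sq]
  have := normSq_add_sub_normSq_sub_one hA u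
  constructor <;> intro <;> linarith

theorem Complex.norm_sub_one_lt_norm_add_iff {A : ℂ} (hA : ‖A‖ = 1) (u : ℂ) :
    ‖u - 1‖ < ‖u + A‖ ↔ 0 < ((1 + conj A) * u).re := by
  rw [← sq_lt_sq₀ (norm_nonneg _) (norm_nonneg _), ← normSq_eq_norm_sq, ← normSq_eq_norm_sq]
  have := normSq_add_sub_normSq_sub_one hA u
  constructor <;> intro <;> linarith

theorem HasDerivAt.re_const_mul_comp {w : ℂ → ℂ} {w' : ℂ} {γ : ℝ → ℂ} {γ' : ℂ} {t : ℝ} (a : ℂ)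
    (hw : HasDerivAt w w' (γ t)) (hγ : HasDerivAt γ γ' t) :
    HasDerivAt (fun s => (a * w (γ s)).re) (a * (w' * γ')).re t :=
  reCLM.hasFDerivAt.comp_hasDerivAt t ((hw.comp t hγ).const_mul a)

theorem Complex.re_conj_mul_le (a b : ℂ) : (conj a * b).re ≤ ‖a‖ * ‖b‖ :=
  (re_le_norm _).trans_eq (by rw [norm_mul, norm_conj])

theorem Complex.re_conj_mul_self (a : ℂ) : (conj a * a).re = ‖a‖ ^ 2 := by
  rw [mul_comm, mul_conj, normSq_eq_norm_sq, ofReal_re]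

theorem im_conj_mul_deriv_eq_zero {w : ℂ → ℂ} {w' z₀ : ℂ} (hw : HasDerivAt w w' z₀)
    (hmax : ∀ z, ‖z‖ = ‖z₀‖ → ‖w z‖ ≤ ‖w z₀‖) :
    (conj (w z₀) * (z₀ * w')).im = 0 := by
  have hγ : HasDerivAt (fun θ : ℝ => z₀ * exp (θ * I)) (z₀ * I) 0 := by
    simpa using (((hasDerivAt_id (0 : ℝ)).ofReal_comp.mul_const I).cexp).const_mul z₀
  have hφ := HasDerivAt.re_const_mul_comp (conj (w z₀)) (by simpa using hw) hγ
  have hmax' : IsLocalMax (fun θ : ℝ => (conj (w z₀) * w (z₀ * exp (θ * I))).re) 0 := by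
    refine Filter.Eventually.of_forall fun θ => ?_
    simp only [ofReal_zero, zero_mul, exp_zero, mul_one, re_conj_mul_self]
    refine (re_conj_mul_le _ _).trans ?_
    rw [sq]
    gcongr
    exact hmax _ (by simp [norm_exp])
  have := hmax'.hasDerivAt_eq_zero hφ
  rw [show conj (w z₀) * (w' * (z₀ * I)) = conj (w z₀) * (z₀ * w') * I by ring, mul_I_re] at this
  linarith

theorem sq_norm_le_re_conj_mul_deriv {w : ℂ → ℂ} {w' z₀ : ℂ} (hw : HasDerivAt w w' z₀)
    (hrad : ∀ s ∈ Ioo (0 : ℝ) 1, ‖w (s * z₀)‖ ≤ s * ‖w z₀‖) :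
    ‖w z₀‖ ^ 2 ≤ (conj (w z₀) * (z₀ * w')).re := by
  set g : ℝ → ℝ := fun s => (conj (w z₀) * w (s * z₀)).re - s * ‖w z₀‖ ^ 2
  have hγ : HasDerivAt (fun s : ℝ => (s : ℂ) * z₀) z₀ 1 := by
    simpa using (hasDerivAt_id (1 : ℝ)).ofReal_comp.mul_const z₀
  have hg : HasDerivAt g ((conj (w z₀) * (w' * z₀)).re - ‖w z₀‖ ^ 2) 1 := by
    have := (HasDerivAt.re_const_mul_comp (conj (w z₀)) (by simpa using hw) hγ).sub
      ((hasDerivAt_id (1 : ℝ)).mul_const (‖w z₀‖ ^ 2))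
    rw [one_mul] at this
    exact this
  have hmax : IsLocalMaxOn g (Ioo 0 1) 1 := by
    refine Filter.eventually_of_mem self_mem_nhdsWithin fun s hs => ?_
    simp only [g, ofReal_one, one_mul, re_conj_mul_self, sub_self, sub_nonpos]
    calc (conj (w z₀) * w (s * z₀)).re ≤ ‖w z₀‖ * (s * ‖w z₀‖) :=
          (re_conj_mul_le _ _).trans (by gcongr; exact hrad s hs)
      _ = s * ‖w z₀‖ ^ 2 := by ring
  have hcone : (0 : ℝ) - 1 ∈ posTangentConeAt (Ioo 0 1) 1 :=
    sub_mem_posTangentConeAt_of_openSegment_subset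
      (by rw [openSegment_eq_Ioo' (by norm_num)]; simp)
  have := hmax.hasFDerivWithinAt_nonpos hg.hasFDerivAt.hasFDerivWithinAt hcone
  simp only [ContinuousLinearMap.toSpanSingleton_apply, smul_eq_mul] at this
  rw [mul_comm z₀]
  linarith

theorem jack_lemma {w : ℂ → ℂ} {z₀ : ℂ}
    (hw : ∀ z ∈ closedBall (0 : ℂ) ‖z₀‖, DifferentiableAt ℂ w z) (hw0 : w 0 = 0)
    (hmax : ∀ z ∈ closedBall (0 : ℂ) ‖z₀‖, ‖w z‖ ≤ ‖w z₀‖) (hwz₀ : w z₀ ≠ 0) :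
    ∃ k : ℝ, 1 ≤ k ∧ z₀ * deriv w z₀ = k * w z₀ := by
  have hr : 0 < ‖z₀‖ := norm_pos_iff.mpr fun h => hwz₀ (h ▸ hw0)
  have hder := (hw z₀ (by simp)).hasDerivAt
  have hschwarz : ∀ z ∈ ball (0 : ℂ) ‖z₀‖, ‖w z‖ ≤ ‖w z₀‖ / ‖z₀‖ * ‖z‖ := by
    intro z hz
    have hmaps : MapsTo w (ball 0 ‖z₀‖) (closedBall (w 0) ‖w z₀‖) := fun z hz => by
      simpa [hw0] using hmax z (ball_subset_closedBall hz)
    simpa [hw0] using Complex.dist_le_div_mul_dist_of_mapsTo_ball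
      (fun z hz => (hw z (ball_subset_closedBall hz)).differentiableWithinAt) hmaps hz
  have hrad : ∀ s ∈ Ioo (0 : ℝ) 1, ‖w (s * z₀)‖ ≤ s * ‖w z₀‖ := by
    rintro s ⟨hs0, hs1⟩
    have hnorm : ‖(s : ℂ) * z₀‖ = s * ‖z₀‖ := by simp [abs_of_pos hs0]
    calc ‖w (s * z₀)‖ ≤ ‖w z₀‖ / ‖z₀‖ * (s * ‖z₀‖) :=
          hnorm ▸ hschwarz _ (by rw [mem_ball_zero_iff, hnorm]; nlinarith)
      _ = s * ‖w z₀‖ := by field_simp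
  set v := conj (w z₀) * (z₀ * deriv w z₀)
  have him : v.im = 0 := im_conj_mul_deriv_eq_zero hder fun z hz => hmax z (by simp [hz])
  have hre : ‖w z₀‖ ^ 2 ≤ v.re := sq_norm_le_re_conj_mul_deriv hder hrad
  have hpos : 0 < ‖w z₀‖ ^ 2 := by positivity
  refine ⟨v.re / ‖w z₀‖ ^ 2, (one_le_div hpos).mpr hre, ?_⟩
  have hv : (v.re : ℂ) = v := ext rfl (by simp [him])
  have hsq : conj (w z₀) * w z₀ = ((‖w z₀‖ ^ 2 : ℝ) : ℂ) := by
    rw [mul_comm, mul_conj, normSq_eq_norm_sq]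
  have hsq0 : ((‖w z₀‖ ^ 2 : ℝ) : ℂ) ≠ 0 := ofReal_ne_zero.mpr hpos.ne'
  rw [ofReal_div, hv, div_mul_eq_mul_div, eq_div_iff hsq0, ← hsq]
  ring

theorem ContinuousOn.exists_eq_zero_nonneg_on_closedBall {E : Type*} [NormedAddCommGroup E]
    [NormedSpace ℝ E] [ProperSpace E] {c : E → ℝ} {R : ℝ} (hc : ContinuousOn c (ball 0 R))
    (h0 : 0 < c 0) {z₁ : E} (hz₁ : z₁ ∈ ball 0 R) (hc₁ : c z₁ ≤ 0) :
    ∃ z₀ ∈ ball (0 : E) R, c z₀ = 0 ∧ ∀ z ∈ closedBall (0 : E) ‖z₀‖, 0 ≤ c z := by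
  have hz₁R : ‖z₁‖ < R := mem_ball_zero_iff.mp hz₁
  set K := closedBall (0 : E) ‖z₁‖ ∩ c ⁻¹' Iic 0
  have hK : IsCompact K := (isCompact_closedBall _ _).of_isClosed_subset
    ((hc.mono (closedBall_subset_ball hz₁R)).preimage_isClosed_of_isClosed isClosed_closedBall
      isClosed_Iic)
    inter_subset_left
  obtain ⟨z₀, ⟨hz₀₁, hcz₀⟩, hmin⟩ :=
    hK.exists_isMinOn ⟨z₁, by simp [K, hc₁]⟩ continuous_norm.continuousOn
  have hz₀R : ‖z₀‖ < R := (mem_closedBall_zero_iff.mp hz₀₁).trans_lt hz₁R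
  have hball_nonneg : ∀ z ∈ ball (0 : E) ‖z₀‖, 0 ≤ c z := fun z hz => by
    by_contra! h
    have hz := mem_ball_zero_iff.mp hz
    have : ‖z₀‖ ≤ ‖z‖ := hmin ⟨by simp only [mem_closedBall_zero_iff] at hz₀₁ ⊢; linarith, h.le⟩
    linarith
  have hr : ‖z₀‖ ≠ 0 := fun h => by
    rw [norm_eq_zero.mp h] at hcz₀
    exact hcz₀.not_gt h0
  have hnonneg : ∀ z ∈ closedBall (0 : E) ‖z₀‖, 0 ≤ c z := by
    rw [← closure_ball _ hr]
    exact le_on_closure hball_nonneg continuousOn_const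
      (hc.mono (closure_ball (0 : E) hr ▸ closedBall_subset_ball hz₀R))
  exact ⟨z₀, mem_ball_zero_iff.mpr hz₀R, le_antisymm hcz₀ (hnonneg z₀ (by simp)), hnonneg⟩

theorem one_add_mul_div_eq {A u : ℂ} (hu : u + A ≠ 0) :
    1 + A * ((u - 1) / (u + A)) = (1 + A) * u / (u + A) := by
  field_simp; ring

theorem mul_deriv_div_sq_eq {p : ℂ → ℂ} {A z : ℂ} (hp : DifferentiableAt ℂ p z)
    (hpz : p z ≠ 0) (hpA : p z + A ≠ 0) (h1A : 1 + A ≠ 0) :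
    z * deriv p z / p z ^ 2 = (1 + A) * (z * deriv (fun z => (p z - 1) / (p z + A)) z) /
      (1 + A * ((p z - 1) / (p z + A))) ^ 2 := by
  have hw : HasDerivAt (fun z => (p z - 1) / (p z + A))
      ((deriv p z * (p z + A) - (p z - 1) * deriv p z) / (p z + A) ^ 2) z :=
    (hp.hasDerivAt.sub_const 1).div (hp.hasDerivAt.add_const A) hpA
  rw [hw.deriv, one_add_mul_div_eq hpA]
  field_simp
  ring

theorem subordinate_of_re_pos {A : ℂ} (hA : ‖A‖ = 1) {p : ℂ → ℂ}
    (hp : DifferentiableOn ℂ p (ball 0 1)) (hp0 : p 0 = 1)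
    (hpos : ∀ z ∈ ball (0 : ℂ) 1, 0 < ((1 + conj A) * p z).re) :
    Subordinate p (fun z => (1 + A * z) / (1 - z)) := by
  have hlt : ∀ z ∈ ball (0 : ℂ) 1, ‖p z - 1‖ < ‖p z + A‖ := fun z hz =>
    (norm_sub_one_lt_norm_add_iff hA _).mpr (hpos z hz)
  have hpA : ∀ z ∈ ball (0 : ℂ) 1, p z + A ≠ 0 := fun z hz h => by
    simpa [h] using (norm_nonneg _).trans_lt (hlt z hz)
  have hw : ∀ z ∈ ball (0 : ℂ) 1, ‖(p z - 1) / (p z + A)‖ < 1 := fun z hz => by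
    rw [norm_div, div_lt_one (norm_pos_iff.mpr (hpA z hz))]
    exact hlt z hz
  refine ⟨fun z => (p z - 1) / (p z + A), (hp.sub_const 1).div (hp.add_const A) hpA,
    by simp [hp0], fun z hz => mem_ball_zero_iff.mpr (hw z hz), fun z hz => ?_⟩
  have h1w : 1 - (p z - 1) / (p z + A) ≠ 0 := fun h => by
    simpa [show (p z - 1) / (p z + A) = 1 by linear_combination -h] using hw z hz
  rw [eq_div_iff h1w]
  field_simp [hpA z hz]
  ring

theorem exists_mul_deriv_eq_of_re_nonpos {A : ℂ} (hA : ‖A‖ = 1) (h1A : 1 + A ≠ 0) {p : ℂ → ℂ}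
    (hp : DifferentiableOn ℂ p (ball 0 1)) (hp0 : p 0 = 1) {z₁ : ℂ} (hz₁ : z₁ ∈ ball 0 1)
    (hc₁ : ((1 + conj A) * p z₁).re ≤ 0) :
    ∃ z₀ ∈ ball (0 : ℂ) 1, ∃ k : ℝ, 1 ≤ k ∧ p z₀ + A ≠ 0 ∧ ‖(p z₀ - 1) / (p z₀ + A)‖ = 1 ∧
      z₀ * deriv (fun z => (p z - 1) / (p z + A)) z₀ = k * ((p z₀ - 1) / (p z₀ + A)) := by
  have hc : ContinuousOn (fun z => ((1 + conj A) * p z).re) (ball 0 1) :=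
    continuous_re.comp_continuousOn (continuousOn_const.mul hp.continuousOn)
  have hc0 : 0 < ((1 + conj A) * p 0).re := by
    have := normSq_add_sub_normSq_sub_one hA 1
    rw [sub_self, map_zero, sub_zero] at this
    rw [hp0]
    linarith [normSq_pos.mpr h1A]
  obtain ⟨z₀, hz₀, hcz₀, hnonneg⟩ := hc.exists_eq_zero_nonneg_on_closedBall hc0 hz₁ hc₁
  have hball : closedBall (0 : ℂ) ‖z₀‖ ⊆ ball 0 1 :=
    closedBall_subset_ball (mem_ball_zero_iff.mp hz₀)
  have hle : ∀ z ∈ closedBall (0 : ℂ) ‖z₀‖, ‖p z - 1‖ ≤ ‖p z + A‖ := fun z hz =>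
    (norm_sub_one_le_norm_add_iff hA _).mpr (hnonneg z hz)
  have hpA : ∀ z ∈ closedBall (0 : ℂ) ‖z₀‖, p z + A ≠ 0 := fun z hz h => by
    have hpz : p z = 1 := by simpa [h, sub_eq_zero] using hle z hz
    exact h1A (by rwa [hpz] at h)
  set w := fun z => (p z - 1) / (p z + A)
  have hwle : ∀ z ∈ closedBall (0 : ℂ) ‖z₀‖, ‖w z‖ ≤ 1 := fun z hz => by
    rw [norm_div, div_le_one (norm_pos_iff.mpr (hpA z hz))]
    exact hle z hz
  have hz₀' : z₀ ∈ closedBall (0 : ℂ) ‖z₀‖ := by simp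
  have hwz₀ : ‖w z₀‖ = 1 := by
    refine le_antisymm (hwle z₀ hz₀') ?_
    rw [norm_div, one_le_div (norm_pos_iff.mpr (hpA z₀ hz₀'))]
    exact not_lt.mp fun h => ((norm_sub_one_lt_norm_add_iff hA _).mp h).ne' hcz₀
  have hwd : ∀ z ∈ closedBall (0 : ℂ) ‖z₀‖, DifferentiableAt ℂ w z := fun z hz =>
    have hpd := hp.differentiableAt (isOpen_ball.mem_nhds (hball hz))
    (hpd.sub_const 1).div (hpd.add_const A) (hpA z hz)
  obtain ⟨k, hk, hkw⟩ := jack_lemma hwd (by simp [w, hp0]) (fun z hz => hwz₀ ▸ hwle z hz)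
    (norm_ne_zero_iff.mp (by simp [hwz₀]))
  exact ⟨z₀, hz₀, k, hk, hpA z₀ hz₀', hwz₀, hkw⟩

theorem re_pos_of_subordinate {A : ℂ} (hA : ‖A‖ = 1) (h1A : 1 + A ≠ 0) {p : ℂ → ℂ}
    (hp : DifferentiableOn ℂ p (ball 0 1)) (hp0 : p 0 = 1)
    (hpne : ∀ z ∈ ball (0 : ℂ) 1, p z ≠ 0)
    (hsub : Subordinate (fun z => z * deriv p z / (p z) ^ 2)
      (fun z => (A + 1) * z / (1 + A * z) ^ 2)) :
    ∀ z ∈ ball (0 : ℂ) 1, 0 < ((1 + conj A) * p z).re := by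
  by_contra! ⟨z₁, hz₁, hc₁⟩
  obtain ⟨z₀, hz₀, k, hk, hpA, hwz₀, hkw⟩ :=
    exists_mul_deriv_eq_of_re_nonpos hA h1A hp hp0 hz₁ hc₁
  have hAw₀ : 1 + A * ((p z₀ - 1) / (p z₀ + A)) ≠ 0 := by
    rw [one_add_mul_div_eq hpA]
    exact div_ne_zero (mul_ne_zero h1A (hpne z₀ hz₀)) hpA
  obtain ⟨ω, -, -, hωmaps, hωeq⟩ := hsub
  apply add_one_mul_div_sq_ne_of_norm_eq_one hA h1A (mem_ball_zero_iff.mp (hωmaps z₀ hz₀)) hwz₀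
    hAw₀ hk
  have hq := hωeq z₀ hz₀
  dsimp only at hq
  have hpd := hp.differentiableAt (isOpen_ball.mem_nhds hz₀)
  rw [← hq, mul_deriv_div_sq_eq hpd (hpne z₀ hz₀) hpA h1A, hkw]

theorem Complex.neg_one_lt_re_exp_neg_two_mul_I {α : ℝ} (hα : |α| < Real.pi / 2) :
    -1 < (exp (-2 * α * I)).re := by
  have hcos : 0 < Real.cos α := Real.cos_pos_of_mem_Ioo (abs_lt.mp hα)
  rw [show -2 * (α : ℂ) * I = ((-2 * α : ℝ) : ℂ) * I by push_cast; ring, exp_ofReal_mul_I_re,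
    neg_mul, Real.cos_neg, Real.cos_two_mul]
  nlinarith

theorem Complex.norm_exp_neg_two_mul_I (α : ℝ) : ‖exp (-2 * α * I)‖ = 1 := by
  rw [show -2 * (α : ℂ) * I = ((-2 * α : ℝ) : ℂ) * I by push_cast; ring, norm_exp_ofReal_mul_I]

theorem stmt14 (α : ℝ) (hα : |α| < Real.pi / 2) (A : ℂ)
    (hA : A = Complex.exp (-2 * α * Complex.I))
    (p : ℂ → ℂ) (hp : DifferentiableOn ℂ p (Metric.ball 0 1)) (hp0 : p 0 = 1)
    (hpne : ∀ z ∈ Metric.ball (0 : ℂ) 1, p z ≠ 0)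
    (hsub : Subordinate (fun z => z * deriv p z / (p z) ^ 2)
      (fun z => (A + 1) * z / (1 + A * z) ^ 2)) :
    Subordinate p (fun z => (1 + A * z) / (1 - z)) := by
  have hAnorm : ‖A‖ = 1 := hA ▸ norm_exp_neg_two_mul_I α
  have h1A : 1 + A ≠ 0 := fun h => by
    have := congrArg re h
    rw [add_re, one_re, zero_re, hA] at this
    linarith [neg_one_lt_re_exp_neg_two_mul_I hα]
  exact subordinate_of_re_pos hAnorm hp hp0 (re_pos_of_subordinate hAnorm h1A hp hp0 hpne hsub)
end

section
/- Let f be a starlike function of order α, 0 ≤ α < 1, i.e., f analytic on 𝔻, f(0) = 0, f'(0) = 1, and Re(z f'(z)/f(z)) > α on 𝔻, and set 1/β = 2(1−α). Then |f(z)| ≤ |z|/(1−|z|)^{1/β} for all z ∈ 𝔻, and |f''(0)| ≤ 2/β. -/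
/-!
Write `f z = z h(z)` with `h = dslope f 0`, so that `h 0 = 1`, `h` has no zeros in the disk and
`z f'(z)/f(z) = 1 + z h'(z)/h(z)`. Starlikeness of order `α` says `Re (-z h'/h) ≤ 1 - α`, and
Borel–Carathéodory turns this into `|z h'/h| ≤ 2(1-α)|z|/(1-|z|)` together with its infinitesimal
version `|h'(0)| ≤ 2(1-α)`. Integrating `d/dt log|h(tz)| = Re (z h'(tz)/h(tz))` along the radius
gives `|h(z)| ≤ (1-|z|)^{-2(1-α)}`, and `f''(0) = 2 h'(0)`.
-/

open Metric Set Filter Topology Complex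

section Calculus

variable {𝕜 : Type*} [NontriviallyNormedField 𝕜]

theorem mul_dslope_zero_of_map_zero {f : 𝕜 → 𝕜} (hf0 : f 0 = 0) (z : 𝕜) :
    z * dslope f 0 z = f z := by
  simpa [hf0] using sub_smul_dslope f 0 z

theorem dslope_zero_ne_zero {f : 𝕜 → 𝕜} {s : Set 𝕜} (hf0 : f 0 = 0) (hf1 : deriv f 0 ≠ 0)
    (hfne : ∀ z ∈ s, z ≠ 0 → f z ≠ 0) : ∀ z ∈ s, dslope f 0 z ≠ 0 := by
  intro z hz
  rcases eq_or_ne z 0 with rfl | hz0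
  · rwa [dslope_same]
  · exact right_ne_zero_of_mul (mul_dslope_zero_of_map_zero hf0 z ▸ hfne z hz hz0)

theorem mul_logDeriv_id_mul {h : 𝕜 → 𝕜} {z : 𝕜} (hz : z ≠ 0) (hhz : h z ≠ 0)
    (hd : DifferentiableAt 𝕜 h z) :
    z * logDeriv (fun w => w * h w) z = 1 + z * logDeriv h z := by
  rw [logDeriv_mul z hz hhz differentiableAt_fun_id hd, logDeriv_id', mul_add,
    mul_one_div_cancel hz]

theorem hasDerivAt_id_mul_zero {φ : 𝕜 → 𝕜} (hφ : DifferentiableAt 𝕜 φ 0) :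
    HasDerivAt (fun z => z * φ z) (φ 0) 0 :=
  ((hasDerivAt_id' 0).mul hφ.hasDerivAt).congr_deriv (by simp)

theorem deriv_deriv_id_mul_zero {h : 𝕜 → 𝕜} (hd : ∀ᶠ z in 𝓝 0, DifferentiableAt 𝕜 h z)
    (hd' : DifferentiableAt 𝕜 (deriv h) 0) :
    deriv (deriv fun z => z * h z) 0 = 2 * deriv h 0 := by
  have hev : (fun z => h z + z * deriv h z) =ᶠ[𝓝 0] deriv fun z => z * h z := by
    filter_upwards [hd] with z hz
    rw [deriv_fun_mul differentiableAt_fun_id hz]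
    simp
  have := (hd.self_of_nhds.hasDerivAt.add
    ((hasDerivAt_id (0 : 𝕜)).mul hd'.hasDerivAt)).congr_of_eventuallyEq hev.symm
  rw [this.deriv]
  simp only [id, one_mul, zero_mul, add_zero]
  ring

end Calculus

theorem HasDerivAt.log_norm {c : ℝ → ℂ} {c' : ℂ} {t : ℝ} (hc : HasDerivAt c c' t)
    (ht : c t ≠ 0) : HasDerivAt (fun s => Real.log ‖c s‖) (c' / c t).re t := by
  have hsq := (hc.norm_sq.log (by positivity)).div_const 2
  have hfun : (fun s => Real.log (‖c s‖ ^ 2) / 2) = fun s => Real.log ‖c s‖ := by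
    funext s
    rw [Real.log_pow]
    ring
  have hval : 2 * Inner.inner ℝ (c t) c' / ‖c t‖ ^ 2 / 2 = (c' / c t).re := by
    rw [Complex.inner, div_re, Complex.sq_norm, normSq_apply]
    simp only [mul_re, conj_re, conj_im]
    field_simp
    ring
  rwa [hfun, hval] at hsq

theorem Complex.norm_deriv_le_of_re_le {f : ℂ → ℂ} {M R : ℝ} (hM : 0 < M)
    (hf : DifferentiableOn ℂ f (ball 0 R)) (hf₁ : MapsTo f (ball 0 R) {z | z.re ≤ M})
    (hR : 0 < R) (hf₂ : f 0 = 0) : ‖deriv f 0‖ ≤ 2 * M / R := by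
  have hslope : Tendsto (fun z => ‖slope f 0 z‖) (𝓝[≠] 0) (𝓝 ‖deriv f 0‖) :=
    (hf.differentiableAt (ball_mem_nhds 0 hR)).hasDerivAt.tendsto_slope.norm
  have hbound : Tendsto (fun z : ℂ => 2 * M / (R - ‖z‖)) (𝓝[≠] 0) (𝓝 (2 * M / R)) := by
    have : ContinuousAt (fun z : ℂ => 2 * M / (R - ‖z‖)) 0 := by
      fun_prop (disch := simp [hR.ne'])
    simpa using this.tendsto.mono_left nhdsWithin_le_nhds
  refine le_of_tendsto_of_tendsto hslope hbound ?_
  filter_upwards [self_mem_nhdsWithin, nhdsWithin_le_nhds (ball_mem_nhds 0 hR)]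
    with z (hz0 : z ≠ 0) hzR
  rw [slope_def_field, hf₂, sub_zero, sub_zero, norm_div, div_le_iff₀ (norm_pos_iff.2 hz0)]
  calc ‖f z‖ ≤ 2 * M * ‖z‖ / (R - ‖z‖) := borelCaratheodory_zero hM hf hf₁ hR hzR hf₂
    _ = 2 * M / (R - ‖z‖) * ‖z‖ := by ring

section LogDerivBounds

variable {h : ℂ → ℂ}

theorem differentiableOn_mul_logDeriv {s : Set ℂ} (hd : DifferentiableOn ℂ h s) (hs : IsOpen s)
    (hne : ∀ z ∈ s, h z ≠ 0) : DifferentiableOn ℂ (fun z => z * logDeriv h z) s :=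
  differentiableOn_id.mul ((hd.analyticOnNhd hs).deriv.differentiableOn.div hd hne)

theorem hasDerivAt_log_norm_comp_ofReal_mul {z : ℂ} {t : ℝ}
    (hd : DifferentiableAt ℂ h (t * z)) (hne : h (t * z) ≠ 0) :
    HasDerivAt (fun s : ℝ => Real.log ‖h (s * z)‖) (z * logDeriv h (t * z)).re t := by
  have hray : HasDerivAt (fun s : ℝ => h (s * z)) (deriv h (t * z) * z) t :=
    ((hd.hasDerivAt.comp (t : ℂ) ((hasDerivAt_id' (t : ℂ)).mul_const z)).comp_ofReal).congr_deriv
      (by rw [one_mul])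
  refine (hray.log_norm hne).congr_deriv ?_
  rw [logDeriv_apply, mul_comm z, div_mul_eq_mul_div]

theorem norm_le_mul_rpow_of_re_mul_logDeriv_le {K : ℝ} (hd : DifferentiableOn ℂ h (ball 0 1))
    (hne : ∀ z ∈ ball (0 : ℂ) 1, h z ≠ 0)
    (hb : ∀ z ∈ ball (0 : ℂ) 1, (z * logDeriv h z).re ≤ K * ‖z‖ / (1 - ‖z‖))
    {z : ℂ} (hz : z ∈ ball (0 : ℂ) 1) :
    ‖h z‖ ≤ ‖h 0‖ * (1 - ‖z‖) ^ (-K) := by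
  set r := ‖z‖
  have hr : r < 1 := mem_ball_zero_iff.1 hz
  have hseg : ∀ t ∈ Icc (0 : ℝ) 1, (t : ℂ) * z ∈ ball (0 : ℂ) 1 := fun t ht => by
    rw [mem_ball_zero_iff, norm_mul, norm_real, Real.norm_of_nonneg ht.1]
    nlinarith [norm_nonneg z, ht.2]
  have hpos : ∀ t ∈ Icc (0 : ℝ) 1, 0 < 1 - t * r := fun t ht => by
    nlinarith [norm_nonneg z, ht.1, ht.2]
  set F : ℝ → ℝ := fun t => Real.log ‖h (t * z)‖ + K * Real.log (1 - t * r) with hF_def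
  have hF : ∀ t ∈ Icc (0 : ℝ) 1,
      HasDerivAt F ((z * logDeriv h (t * z)).re - K * r / (1 - t * r)) t := fun t ht =>
    ((hasDerivAt_log_norm_comp_ofReal_mul (hd.differentiableAt
      (isOpen_ball.mem_nhds (hseg t ht))) (hne _ (hseg t ht))).add
      ((((hasDerivAt_id' t).mul_const r).const_sub 1).log (hpos t ht).ne'
        |>.const_mul K)).congr_deriv (by ring)
  have hanti : AntitoneOn F (Icc 0 1) := by
    refine antitoneOn_of_deriv_nonpos (convex_Icc 0 1)
      (fun t ht => (hF t ht).continuousAt.continuousWithinAt) ?_ ?_ <;> rw [interior_Icc]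
    · exact fun t ht => (hF t (Ioo_subset_Icc_self ht)).differentiableAt.differentiableWithinAt
    · intro t ht
      rw [(hF t (Ioo_subset_Icc_self ht)).deriv, sub_nonpos]
      have hbt := hb _ (hseg t (Ioo_subset_Icc_self ht))
      rw [norm_mul, norm_real, Real.norm_of_nonneg ht.1.le, mul_assoc, re_ofReal_mul] at hbt
      refine le_of_mul_le_mul_left ?_ ht.1
      calc t * (z * logDeriv h (t * z)).re ≤ K * (t * r) / (1 - t * r) := hbt
        _ = t * (K * r / (1 - t * r)) := by ring
  have hF10 : F 1 ≤ F 0 := hanti (left_mem_Icc.2 zero_le_one) (right_mem_Icc.2 zero_le_one)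
    zero_le_one
  simp only [hF_def, ofReal_one, one_mul, ofReal_zero, zero_mul, mul_zero, sub_zero,
    Real.log_one, add_zero] at hF10
  have h1r : 0 < 1 - r := by linarith
  have h0 : 0 < ‖h 0‖ := norm_pos_iff.2 (hne 0 (mem_ball_self one_pos))
  rw [← Real.log_le_log_iff (norm_pos_iff.2 (hne z hz)) (by positivity),
    Real.log_mul h0.ne' (Real.rpow_pos_of_pos h1r _).ne', Real.log_rpow h1r]
  linarith

theorem mapsTo_neg_mul_logDeriv {s : Set ℂ} {M : ℝ}
    (hre : ∀ z ∈ s, -M ≤ (z * logDeriv h z).re) :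
    MapsTo (-fun z => z * logDeriv h z) s {w | w.re ≤ M} := fun z hz => by
  change (-(z * logDeriv h z)).re ≤ M
  linarith [neg_re (z * logDeriv h z), hre z hz]

theorem norm_le_mul_rpow_of_neg_le_re_mul_logDeriv {M : ℝ} (hM : 0 < M)
    (hd : DifferentiableOn ℂ h (ball 0 1)) (hne : ∀ z ∈ ball (0 : ℂ) 1, h z ≠ 0)
    (hre : ∀ z ∈ ball (0 : ℂ) 1, -M ≤ (z * logDeriv h z).re) {z : ℂ} (hz : z ∈ ball (0 : ℂ) 1) :
    ‖h z‖ ≤ ‖h 0‖ * (1 - ‖z‖) ^ (-(2 * M)) := by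
  refine norm_le_mul_rpow_of_re_mul_logDeriv_le hd hne (fun w hw => ?_) hz
  have := borelCaratheodory_zero hM (differentiableOn_mul_logDeriv hd isOpen_ball hne).neg
    (mapsTo_neg_mul_logDeriv hre) one_pos hw (by simp)
  rw [Pi.neg_apply, norm_neg] at this
  exact (re_le_norm _).trans this

theorem norm_logDeriv_zero_le_of_neg_le_re_mul_logDeriv {M : ℝ} (hM : 0 < M)
    (hd : DifferentiableOn ℂ h (ball 0 1)) (hne : ∀ z ∈ ball (0 : ℂ) 1, h z ≠ 0)
    (hre : ∀ z ∈ ball (0 : ℂ) 1, -M ≤ (z * logDeriv h z).re) :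
    ‖logDeriv h 0‖ ≤ 2 * M := by
  have hA : AnalyticAt ℂ h 0 := hd.analyticAt (ball_mem_nhds 0 one_pos)
  have hq : HasDerivAt (-fun z => z * logDeriv h z) (-logDeriv h 0) 0 :=
    (hasDerivAt_id_mul_zero (hA.deriv.differentiableAt.div hA.differentiableAt
      (hne 0 (mem_ball_self one_pos)))).neg
  have := Complex.norm_deriv_le_of_re_le hM (differentiableOn_mul_logDeriv hd isOpen_ball hne).neg
    (mapsTo_neg_mul_logDeriv hre) one_pos (by simp)
  rwa [hq.deriv, norm_neg, div_one] at this

end LogDerivBounds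

theorem neg_le_re_mul_logDeriv_dslope {f : ℂ → ℂ} {α : ℝ} (hα1 : α < 1) (hf0 : f 0 = 0)
    (hd : DifferentiableOn ℂ (dslope f 0) (ball 0 1))
    (hne : ∀ z ∈ ball (0 : ℂ) 1, dslope f 0 z ≠ 0)
    (hstar : ∀ z ∈ ball (0 : ℂ) 1, z ≠ 0 → α < (z * deriv f z / f z).re) :
    ∀ z ∈ ball (0 : ℂ) 1, -(1 - α) ≤ (z * logDeriv (dslope f 0) z).re := by
  intro z hz
  rcases eq_or_ne z 0 with rfl | hz0
  · simpa using hα1.le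
  · have hfz := hstar z hz hz0
    have hfh : f = fun w => w * dslope f 0 w :=
      funext fun w => (mul_dslope_zero_of_map_zero hf0 w).symm
    rw [mul_div_assoc, ← logDeriv_apply, hfh, mul_logDeriv_id_mul hz0 (hne z hz)
      (hd.differentiableAt (isOpen_ball.mem_nhds hz)), add_re, one_re] at hfz
    linarith

theorem stmt17_general (α : ℝ) (hα1 : α < 1) (β : ℝ) (hβ : 1 / β = 2 * (1 - α))
    (f : ℂ → ℂ) (hf : DifferentiableOn ℂ f (Metric.ball 0 1))
    (hf0 : f 0 = 0) (hf1 : deriv f 0 = 1)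
    (hfne : ∀ z ∈ Metric.ball (0 : ℂ) 1, z ≠ 0 → f z ≠ 0)
    (hstar : ∀ z ∈ Metric.ball (0 : ℂ) 1, z ≠ 0 → α < (z * deriv f z / f z).re) :
    (∀ z ∈ Metric.ball (0 : ℂ) 1,
        ‖f z‖ ≤ ‖z‖ / (1 - ‖z‖) ^ (1 / β)) ∧
      ‖deriv (deriv f) 0‖ ≤ 2 / β := by
  have hM : 0 < 1 - α := by linarith
  have hfh : f = fun z => z * dslope f 0 z :=
    funext fun z => (mul_dslope_zero_of_map_zero hf0 z).symm
  have hd : DifferentiableOn ℂ (dslope f 0) (ball 0 1) :=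
    (differentiableOn_dslope (ball_mem_nhds 0 one_pos)).2 hf
  have hh0 : dslope f 0 0 = 1 := (dslope_same f 0).trans hf1
  have hne := dslope_zero_ne_zero hf0 (hf1 ▸ one_ne_zero) hfne
  have hre := neg_le_re_mul_logDeriv_dslope hα1 hf0 hd hne hstar
  refine ⟨fun z hz => ?_, ?_⟩
  · have hgrowth := norm_le_mul_rpow_of_neg_le_re_mul_logDeriv hM hd hne hre hz
    rw [hh0, norm_one, one_mul, Real.rpow_neg (by linarith [mem_ball_zero_iff.1 hz])] at hgrowth
    rw [hfh, norm_mul, hβ, div_eq_mul_inv]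
    exact mul_le_mul_of_nonneg_left hgrowth (norm_nonneg z)
  · have hcoeff := norm_logDeriv_zero_le_of_neg_le_re_mul_logDeriv hM hd hne hre
    rw [logDeriv_apply, hh0, div_one] at hcoeff
    have hA : AnalyticAt ℂ (dslope f 0) 0 := hd.analyticAt (ball_mem_nhds 0 one_pos)
    rw [hfh, deriv_deriv_id_mul_zero (hA.eventually_analyticAt.mono fun _ h => h.differentiableAt)
      hA.deriv.differentiableAt, norm_mul, Complex.norm_two, show 2 / β = 2 * (1 / β) by ring, hβ]
    linarith

theorem stmt17 (α : ℝ) (hα0 : 0 ≤ α) (hα1 : α < 1) (β : ℝ) (hβ : 1 / β = 2 * (1 - α))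
    (f : ℂ → ℂ) (hf : DifferentiableOn ℂ f (Metric.ball 0 1))
    (hf0 : f 0 = 0) (hf1 : deriv f 0 = 1)
    (hfne : ∀ z ∈ Metric.ball (0 : ℂ) 1, z ≠ 0 → f z ≠ 0)
    (hstar : ∀ z ∈ Metric.ball (0 : ℂ) 1, z ≠ 0 → α < (z * deriv f z / f z).re) :
    (∀ z ∈ Metric.ball (0 : ℂ) 1,
        ‖f z‖ ≤ ‖z‖ / (1 - ‖z‖) ^ (1 / β)) ∧
      ‖deriv (deriv f) 0‖ ≤ 2 / β :=
  stmt17_general α hα1 β hβ f hf hf0 hf1 hfne hstar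
end
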